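/- Let (A, μ, Δ, R) be a cobraided bialgebra over a commutative ring k and α : A → A an injective k-linear map that is multiplicative (α(xy) = α(x)α(y)) and comultiplicative ((α ⊗ α)∘Δ = Δ∘α). Then for every integer n ≥ 1, the quintuple A_α^(n) = (A, μ_α, Δ_α, α, R^{αⁿ}), where μ_α = α ∘ μ, Δ_α = Δ ∘ α, and R^{αⁿ}(x ⊗ y) = R(αⁿ(x) ⊗ αⁿ(y)), is a cobraided Hom-bialgebra. -/

import Mathlib

open TensorProduct

/-- The axioms of a Hom-bialgebra (no unit or counit assumed):
multiplicativity and comultiplicativity of the twisting map `α`,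
Hom-associativity, Hom-coassociativity, and the compatibility
`Δ(xy) = Σ x₁y₁ ⊗ x₂y₂` (stated via arbitrary finite representations of the
Sweedler sums). -/
def IsHomBialgebra (k : Type*) {A : Type*} [CommRing k] [AddCommGroup A] [Module k A]
    (μ : A →ₗ[k] A →ₗ[k] A) (Δ : A →ₗ[k] A ⊗[k] A) (α : A →ₗ[k] A) : Prop :=
  (∀ x y : A, α (μ x y) = μ (α x) (α y)) ∧
  (∀ x y z : A, μ (α x) (μ y z) = μ (μ x y) (α z)) ∧
  (TensorProduct.map α α ∘ₗ Δ = Δ ∘ₗ α) ∧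
  (TensorProduct.map α Δ ∘ₗ Δ =
    (TensorProduct.assoc k A A A).toLinearMap ∘ₗ TensorProduct.map Δ α ∘ₗ Δ) ∧
  (∀ (x y : A) (m n : ℕ) (x1 x2 : Fin m → A) (y1 y2 : Fin n → A),
    Δ x = ∑ i, x1 i ⊗ₜ[k] x2 i → Δ y = ∑ j, y1 j ⊗ₜ[k] y2 j →
    Δ (μ x y) = ∑ i, ∑ j, μ (x1 i) (y1 j) ⊗ₜ[k] μ (x2 i) (y2 j))

/-- A cobraided Hom-bialgebra: a Hom-bialgebra together with a bilinear form `R`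
satisfying the three axioms (i), (ii), (iii), stated via arbitrary finite
representations of the Sweedler sums. -/
def IsCobraidedHomBialgebra (k : Type*) {A : Type*} [CommRing k] [AddCommGroup A] [Module k A]
    (μ : A →ₗ[k] A →ₗ[k] A) (Δ : A →ₗ[k] A ⊗[k] A) (α : A →ₗ[k] A)
    (R : A →ₗ[k] A →ₗ[k] k) : Prop :=
  IsHomBialgebra k μ Δ α ∧
  (∀ (x y z : A) (n : ℕ) (z1 z2 : Fin n → A), Δ z = ∑ i, z1 i ⊗ₜ[k] z2 i →
    R (μ x y) (α z) = ∑ i, R (α x) (z1 i) * R (α y) (z2 i)) ∧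
  (∀ (x y z : A) (n : ℕ) (x1 x2 : Fin n → A), Δ x = ∑ i, x1 i ⊗ₜ[k] x2 i →
    R (α x) (μ y z) = ∑ i, R (x1 i) (α z) * R (x2 i) (α y)) ∧
  (∀ (x y : A) (m n : ℕ) (x1 x2 : Fin m → A) (y1 y2 : Fin n → A),
    Δ x = ∑ i, x1 i ⊗ₜ[k] x2 i → Δ y = ∑ j, y1 j ⊗ₜ[k] y2 j →
    ∑ i, ∑ j, R (x2 i) (y2 j) • μ (y1 j) (x1 i)
      = ∑ i, ∑ j, R (x1 i) (y1 j) • μ (x2 i) (y2 j))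

/-- A (classical) cobraided bialgebra, without unit, counit, or invertibility of `R`. -/
def IsCobraidedBialgebra (k : Type*) {A : Type*} [CommRing k] [AddCommGroup A] [Module k A]
    (μ : A →ₗ[k] A →ₗ[k] A) (Δ : A →ₗ[k] A ⊗[k] A) (R : A →ₗ[k] A →ₗ[k] k) : Prop :=
  (∀ x y z : A, μ (μ x y) z = μ x (μ y z)) ∧
  (TensorProduct.map LinearMap.id Δ ∘ₗ Δ =
    (TensorProduct.assoc k A A A).toLinearMap ∘ₗ TensorProduct.map Δ LinearMap.id ∘ₗ Δ) ∧
  (∀ (x y : A) (m n : ℕ) (x1 x2 : Fin m → A) (y1 y2 : Fin n → A),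
    Δ x = ∑ i, x1 i ⊗ₜ[k] x2 i → Δ y = ∑ j, y1 j ⊗ₜ[k] y2 j →
    Δ (μ x y) = ∑ i, ∑ j, μ (x1 i) (y1 j) ⊗ₜ[k] μ (x2 i) (y2 j)) ∧
  (∀ (x y z : A) (n : ℕ) (z1 z2 : Fin n → A), Δ z = ∑ i, z1 i ⊗ₜ[k] z2 i →
    R (μ x y) z = ∑ i, R x (z1 i) * R y (z2 i)) ∧
  (∀ (x y z : A) (n : ℕ) (x1 x2 : Fin n → A), Δ x = ∑ i, x1 i ⊗ₜ[k] x2 i →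
    R x (μ y z) = ∑ i, R (x1 i) z * R (x2 i) y) ∧
  (∀ (x y : A) (m n : ℕ) (x1 x2 : Fin m → A) (y1 y2 : Fin n → A),
    Δ x = ∑ i, x1 i ⊗ₜ[k] x2 i → Δ y = ∑ j, y1 j ⊗ₜ[k] y2 j →
    ∑ i, ∑ j, R (x2 i) (y2 j) • μ (y1 j) (x1 i)
      = ∑ i, ∑ j, R (x1 i) (y1 j) • μ (x2 i) (y2 j))

/-- A braided (quasi-triangular) Hom-bialgebra, with `R ∈ A ⊗ A`. -/
def IsBraidedHomBialgebra (k : Type*) {A : Type*} [CommRing k] [AddCommGroup A] [Module k A]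
    (μ : A →ₗ[k] A →ₗ[k] A) (Δ : A →ₗ[k] A ⊗[k] A) (α : A →ₗ[k] A)
    (Rel : A ⊗[k] A) : Prop :=
  IsHomBialgebra k μ Δ α ∧
  (∀ (n : ℕ) (s t : Fin n → A), Rel = ∑ i, s i ⊗ₜ[k] t i →
    TensorProduct.map Δ α Rel = ∑ i, ∑ j, (α (s i) ⊗ₜ[k] α (s j)) ⊗ₜ[k] μ (t i) (t j)) ∧
  (∀ (n : ℕ) (s t : Fin n → A), Rel = ∑ i, s i ⊗ₜ[k] t i →
    TensorProduct.map α Δ Rel = ∑ i, ∑ j, μ (s i) (s j) ⊗ₜ[k] (α (t j) ⊗ₜ[k] α (t i))) ∧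
  (∀ (x : A) (m n : ℕ) (x1 x2 : Fin m → A) (s t : Fin n → A),
    Δ x = ∑ i, x1 i ⊗ₜ[k] x2 i → Rel = ∑ i, s i ⊗ₜ[k] t i →
    ∑ i, ∑ j, μ (x2 i) (s j) ⊗ₜ[k] μ (x1 i) (t j)
      = ∑ i, ∑ j, μ (s j) (x1 i) ⊗ₜ[k] μ (t j) (x2 i))

/-- The convolution-type product on the dual induced by a comultiplication:
`⟨Δ*(φ ⊗ ψ), x⟩ = Σ φ(x₁) ψ(x₂)`. -/
noncomputable def deltaStar (k : Type*) {A : Type*} [CommRing k] [AddCommGroup A] [Module k A]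
    (Δ : A →ₗ[k] A ⊗[k] A) (φ ψ : Module.Dual k A) : Module.Dual k A :=
  TensorProduct.lift ((LinearMap.mul k k).compl₁₂ φ ψ) ∘ₗ Δ

/-- The bilinear version of `deltaStar`, `Δ* : A* →ₗ A* →ₗ A*`. -/
noncomputable def deltaStarBil (k : Type*) {A : Type*} [CommRing k] [AddCommGroup A] [Module k A]
    (Δ : A →ₗ[k] A ⊗[k] A) :
    Module.Dual k A →ₗ[k] Module.Dual k A →ₗ[k] Module.Dual k A :=
  TensorProduct.curry (Δ.dualMap ∘ₗ TensorProduct.dualDistrib k A A)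

/-- The dual comultiplication `μ* : A* → A* ⊗ A*` of a multiplication `μ` on a
finite free module, determined by `⟨μ*(φ), x ⊗ y⟩ = φ(xy)`. -/
noncomputable def mulStar (k : Type*) {A : Type*} [CommRing k] [AddCommGroup A] [Module k A]
    [Module.Finite k A] [Module.Free k A] (μ : A →ₗ[k] A →ₗ[k] A) :
    Module.Dual k A →ₗ[k] Module.Dual k A ⊗[k] Module.Dual k A :=
  (TensorProduct.dualDistribEquiv k A A).symm.toLinearMap ∘ₗ (TensorProduct.lift μ).dualMap

/-- The bilinear form `R̂` on the dual induced by an element `Rel = Σ sᵢ ⊗ tᵢ ∈ A ⊗ A`: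
`R̂(φ ⊗ ψ) = Σ φ(sᵢ) ψ(tᵢ)`. -/
noncomputable def rhat (k : Type*) {A : Type*} [CommRing k] [AddCommGroup A] [Module k A]
    (Rel : A ⊗[k] A) : Module.Dual k A →ₗ[k] Module.Dual k A →ₗ[k] k :=
  TensorProduct.curry (LinearMap.applyₗ (R := k) Rel ∘ₗ TensorProduct.dualDistrib k A A)

/-- A comodule `(M, α_M, ρ)` over a Hom-coassociative coalgebra `(A, Δ, α)`:
Hom-coassociativity and comultiplicativity of the structure map. -/
def IsComodule (k : Type*) {A M : Type*} [CommRing k] [AddCommGroup A] [Module k A]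
    [AddCommGroup M] [Module k M] (Δ : A →ₗ[k] A ⊗[k] A) (α : A →ₗ[k] A)
    (αM : M →ₗ[k] M) (ρ : M →ₗ[k] A ⊗[k] M) : Prop :=
  ((TensorProduct.assoc k A A M).toLinearMap ∘ₗ TensorProduct.map Δ αM ∘ₗ ρ
      = TensorProduct.map α ρ ∘ₗ ρ) ∧
  (TensorProduct.map α αM ∘ₗ ρ = ρ ∘ₗ αM)

/-- The map `B_{V,W} : V ⊗ W → W ⊗ V`, `B_{V,W}(v ⊗ w) = Σ R(w_A ⊗ v_A) w_W ⊗ v_V`,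
induced by comodule structure maps `ρ_V`, `ρ_W` and a bilinear form `R`. -/
noncomputable def Bmap (k : Type*) {A V W : Type*} [CommRing k] [AddCommGroup A] [Module k A]
    [AddCommGroup V] [Module k V] [AddCommGroup W] [Module k W]
    (R : A →ₗ[k] A →ₗ[k] k) (ρV : V →ₗ[k] A ⊗[k] V) (ρW : W →ₗ[k] A ⊗[k] W) :
    V ⊗[k] W →ₗ[k] W ⊗[k] V :=
  (TensorProduct.lid k (W ⊗[k] V)).toLinearMap
    ∘ₗ TensorProduct.map (TensorProduct.lift R) LinearMap.id
    ∘ₗ (TensorProduct.tensorTensorTensorComm k A W A V).toLinearMap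
    ∘ₗ TensorProduct.map ρW ρV
    ∘ₗ (TensorProduct.comm k V W).toLinearMap

/-- `B` is a solution of the Hom-Yang-Baxter equation for `(V, αV)`. -/
def IsHYBESolution (k : Type*) {V : Type*} [CommRing k] [AddCommGroup V] [Module k V]
    (αV : V →ₗ[k] V) (B : V ⊗[k] V →ₗ[k] V ⊗[k] V) : Prop :=
  (B ∘ₗ TensorProduct.map αV αV = TensorProduct.map αV αV ∘ₗ B) ∧
  ((TensorProduct.assoc k V V V).symm.toLinearMap
      ∘ₗ TensorProduct.map αV B
      ∘ₗ (TensorProduct.assoc k V V V).toLinearMap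
      ∘ₗ TensorProduct.map B αV
      ∘ₗ (TensorProduct.assoc k V V V).symm.toLinearMap
      ∘ₗ TensorProduct.map αV B
      ∘ₗ (TensorProduct.assoc k V V V).toLinearMap
    = TensorProduct.map B αV
      ∘ₗ (TensorProduct.assoc k V V V).symm.toLinearMap
      ∘ₗ TensorProduct.map αV B
      ∘ₗ (TensorProduct.assoc k V V V).toLinearMap
      ∘ₗ TensorProduct.map B αV)

/-- A (classical, possibly non-unital non-counital) bialgebra. -/
def IsBialgebraNC (k : Type*) {H : Type*} [CommRing k] [AddCommGroup H] [Module k H]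
    (μ : H →ₗ[k] H →ₗ[k] H) (Δ : H →ₗ[k] H ⊗[k] H) : Prop :=
  (∀ x y z : H, μ (μ x y) z = μ x (μ y z)) ∧
  (TensorProduct.map LinearMap.id Δ ∘ₗ Δ =
    (TensorProduct.assoc k H H H).toLinearMap ∘ₗ TensorProduct.map Δ LinearMap.id ∘ₗ Δ) ∧
  (∀ (x y : H) (m n : ℕ) (x1 x2 : Fin m → H) (y1 y2 : Fin n → H),
    Δ x = ∑ i, x1 i ⊗ₜ[k] x2 i → Δ y = ∑ j, y1 j ⊗ₜ[k] y2 j →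
    Δ (μ x y) = ∑ i, ∑ j, μ (x1 i) (y1 j) ⊗ₜ[k] μ (x2 i) (y2 j))

/-!
Pulling `R` back along the bialgebra endomorphism `αⁿ` keeps `(A, μ, Δ)` cobraided: the first
two axioms transport directly, while the braiding relation (iii) for `R ∘ (αⁿ ⊗ αⁿ)` is only
obtained after applying `αⁿ`, which is where injectivity enters. Twisting a cobraided bialgebra
by a bialgebra endomorphism `α` then gives a cobraided Hom-bialgebra, since each twisted axiom
is an untwisted one evaluated at `α`-images.
-/

section Twisting

variable {k A : Type*} [CommRing k] [AddCommGroup A] [Module k A]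
  {μ : A →ₗ[k] A →ₗ[k] A} {Δ : A →ₗ[k] A ⊗[k] A}

theorem comul_apply_eq_sum_of_map_comp_eq {β : A →ₗ[k] A} (hβ : map β β ∘ₗ Δ = Δ ∘ₗ β)
    {z : A} {p : ℕ} {z1 z2 : Fin p → A} (hz : Δ z = ∑ i, z1 i ⊗ₜ[k] z2 i) :
    Δ (β z) = ∑ i, β (z1 i) ⊗ₜ[k] β (z2 i) := by
  rw [← LinearMap.comp_apply, ← hβ, LinearMap.comp_apply, hz, map_sum]
  rfl

theorem pow_apply_mul {α : A →ₗ[k] A} (hmul : ∀ x y : A, α (μ x y) = μ (α x) (α y)) (n : ℕ)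
    (x y : A) : (α ^ n) (μ x y) = μ ((α ^ n) x) ((α ^ n) y) := by
  induction n with
  | zero => rfl
  | succ n ih => simp only [pow_succ', Module.End.mul_apply, ih, hmul]

theorem map_pow_comp_eq {α : A →ₗ[k] A} (hcomul : map α α ∘ₗ Δ = Δ ∘ₗ α) (n : ℕ) :
    map (α ^ n) (α ^ n) ∘ₗ Δ = Δ ∘ₗ α ^ n := by
  induction n with
  | zero => simp only [pow_zero, Module.End.one_eq_id, map_id, LinearMap.id_comp,
      LinearMap.comp_id]
  | succ n ih =>
    rw [pow_succ', Module.End.mul_eq_comp, map_comp, LinearMap.comp_assoc, ih,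
      ← LinearMap.comp_assoc, hcomul, LinearMap.comp_assoc]

theorem IsCobraidedBialgebra.compl₁₂ {R : A →ₗ[k] A →ₗ[k] k} (h : IsCobraidedBialgebra k μ Δ R)
    {β : A →ₗ[k] A} (hmul : ∀ x y : A, β (μ x y) = μ (β x) (β y))
    (hcomul : map β β ∘ₗ Δ = Δ ∘ₗ β) (hinj : Function.Injective β) :
    IsCobraidedBialgebra k μ Δ (R.compl₁₂ β β) := by
  obtain ⟨hassoc, hcoassoc, hcompat, hR1, hR2, hR3⟩ := h
  refine ⟨hassoc, hcoassoc, hcompat, ?_, ?_, ?_⟩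
  · intro x y z p z1 z2 hz
    simpa only [LinearMap.compl₁₂_apply, hmul] using
      hR1 (β x) (β y) (β z) p _ _ (comul_apply_eq_sum_of_map_comp_eq hcomul hz)
  · intro x y z p x1 x2 hx
    simpa only [LinearMap.compl₁₂_apply, hmul] using
      hR2 (β x) (β y) (β z) p _ _ (comul_apply_eq_sum_of_map_comp_eq hcomul hx)
  · intro x y m p x1 x2 y1 y2 hx hy
    apply hinj
    simpa only [LinearMap.compl₁₂_apply, map_sum, map_smul, hmul] using
      hR3 (β x) (β y) m p _ _ _ _ (comul_apply_eq_sum_of_map_comp_eq hcomul hx)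
        (comul_apply_eq_sum_of_map_comp_eq hcomul hy)

theorem IsBialgebraNC.isHomBialgebra_twist (h : IsBialgebraNC k μ Δ) {α : A →ₗ[k] A}
    (hmul : ∀ x y : A, α (μ x y) = μ (α x) (α y)) (hcomul : map α α ∘ₗ Δ = Δ ∘ₗ α) :
    IsHomBialgebra k (μ.compr₂ α) (Δ ∘ₗ α) α := by
  obtain ⟨hassoc, hcoassoc, hcompat⟩ := h
  refine ⟨fun x y => ?_, fun x y z => ?_, ?_, ?_, ?_⟩
  · simp only [LinearMap.compr₂_apply, hmul]
  · simp only [LinearMap.compr₂_apply, hmul, hassoc]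
  · rw [← LinearMap.comp_assoc, hcomul]
  · have hα : map α (Δ ∘ₗ α) = map LinearMap.id Δ ∘ₗ map α α := by
      rw [← map_comp, LinearMap.id_comp]
    have hα' : map (Δ ∘ₗ α) α = map Δ LinearMap.id ∘ₗ map α α := by
      rw [← map_comp, LinearMap.id_comp]
    simp only [hα, hα', LinearMap.comp_assoc]
    rw [← LinearMap.comp_assoc α Δ (map α α), hcomul]
    simp only [← LinearMap.comp_assoc, hcoassoc]
  · intro x y m p x1 x2 y1 y2 hx hy
    simp only [LinearMap.comp_apply, LinearMap.compr₂_apply] at hx hy ⊢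
    rw [hmul, ← LinearMap.comp_apply Δ α, ← hcomul, LinearMap.comp_apply,
      hcompat (α x) (α y) m p x1 x2 y1 y2 hx hy]
    simp only [map_sum, map_tmul]

theorem IsCobraidedBialgebra.isCobraidedHomBialgebra_twist {R : A →ₗ[k] A →ₗ[k] k}
    (h : IsCobraidedBialgebra k μ Δ R) {α : A →ₗ[k] A}
    (hmul : ∀ x y : A, α (μ x y) = μ (α x) (α y)) (hcomul : map α α ∘ₗ Δ = Δ ∘ₗ α) :
    IsCobraidedHomBialgebra k (μ.compr₂ α) (Δ ∘ₗ α) α R := by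
  obtain ⟨hassoc, hcoassoc, hcompat, hR1, hR2, hR3⟩ := h
  refine ⟨IsBialgebraNC.isHomBialgebra_twist ⟨hassoc, hcoassoc, hcompat⟩ hmul hcomul,
    ?_, ?_, ?_⟩
  · intro x y z p z1 z2 hz
    rw [LinearMap.compr₂_apply, hmul]
    exact hR1 (α x) (α y) (α z) p z1 z2 hz
  · intro x y z p x1 x2 hx
    rw [LinearMap.compr₂_apply, hmul]
    exact hR2 (α x) (α y) (α z) p x1 x2 hx
  · intro x y m p x1 x2 y1 y2 hx hy
    simpa only [LinearMap.compr₂_apply, map_sum, map_smul] using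
      congrArg α (hR3 (α x) (α y) m p x1 x2 y1 y2 hx hy)

end Twisting

theorem cobraided_double_twist_general
    (k : Type*) {A : Type*} [CommRing k] [AddCommGroup A] [Module k A]
    (μ : A →ₗ[k] A →ₗ[k] A) (Δ : A →ₗ[k] A ⊗[k] A) (R : A →ₗ[k] A →ₗ[k] k)
    (h : IsCobraidedBialgebra k μ Δ R)
    (α : A →ₗ[k] A)
    (hmul : ∀ x y : A, α (μ x y) = μ (α x) (α y))
    (hcomul : TensorProduct.map α α ∘ₗ Δ = Δ ∘ₗ α)
    (hinj : Function.Injective α)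
    (n : ℕ) :
    IsCobraidedHomBialgebra k (μ.compr₂ α) (Δ ∘ₗ α) α (R.compl₁₂ (α ^ n) (α ^ n)) := by
  have hinj_pow : Function.Injective (α ^ n) := by
    rw [Module.End.coe_pow]
    exact hinj.iterate n
  exact (h.compl₁₂ (pow_apply_mul hmul n) (map_pow_comp_eq hcomul n) hinj_pow)
    |>.isCobraidedHomBialgebra_twist hmul hcomul

/-- Corollary 5.2: twisting both the (co)multiplication and the
cobraiding form.  If `(A, μ, Δ, R)` is a cobraided bialgebra and `α` is an
injective bialgebra morphism, then `(A, α∘μ, Δ∘α, α, R∘(αⁿ ⊗ αⁿ))` is a cobraided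
Hom-bialgebra for all `n ≥ 1`. -/
theorem cobraided_double_twist
    (k : Type*) {A : Type*} [CommRing k] [AddCommGroup A] [Module k A]
    (μ : A →ₗ[k] A →ₗ[k] A) (Δ : A →ₗ[k] A ⊗[k] A) (R : A →ₗ[k] A →ₗ[k] k)
    (h : IsCobraidedBialgebra k μ Δ R)
    (α : A →ₗ[k] A)
    (hmul : ∀ x y : A, α (μ x y) = μ (α x) (α y))
    (hcomul : TensorProduct.map α α ∘ₗ Δ = Δ ∘ₗ α)
    (hinj : Function.Injective α)
    (n : ℕ) (hn : 1 ≤ n) :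
    IsCobraidedHomBialgebra k (μ.compr₂ α) (Δ ∘ₗ α) α (R.compl₁₂ (α ^ n) (α ^ n)) :=
  cobraided_double_twist_general k μ Δ R h α hmul hcomul hinj n
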